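/- Let S : ℝ² → ℝ² be continuous with compact support and assume its Fourier transform F[S](ξ) = ∫_{ℝ²} S(y) e^{-i ξ·y} dy is integrable on ℝ². Define the indicator I_f(z) := (2π)^{-2} ∫_{S¹} ∫_0^∞ [u_p^∞(x̂,ω) + u_s^∞(x̂, √(μ/(λ+2μ)) ω)] e^{i k_p x̂·z} (ω/(λ+2μ)) dω dσ(x̂) for z ∈ ℝ², where k_p = ω/√(λ+2μ). Then I_f(z) = S(z) for every z ∈ ℝ². -/

import Mathlib

/-!
STATEMENT 1 (Theorem 2.1 of the paper, n = 2): the indicator `I_f` built from the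
full (compressional + shear) far field patterns equals the elastic source `S`.
-/

open MeasureTheory Real

noncomputable section

namespace ElasticFull2D

abbrev E2 := EuclideanSpace ℝ (Fin 2)

/-- Componentwise Fourier transform of a vector field. -/
def FT2 (U : E2 → Fin 2 → ℂ) (ξ : E2) : Fin 2 → ℂ :=
  fun j => ∫ x : E2, U x j * Complex.exp (-Complex.I * ((∑ i, x i * ξ i : ℝ) : ℂ))

/-- Compressional wavenumber `k_p = ω / √(λ + 2μ)`. -/
def kp (lam mu ω : ℝ) : ℝ := ω / Real.sqrt (lam + 2 * mu)

/-- Shear wavenumber `k_s = ω / √μ`. -/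
def ks (mu ω : ℝ) : ℝ := ω / Real.sqrt mu

/-- `x̂^⊥ := (-x̂₂, x̂₁)`. -/
def perp (xhat : E2) : Fin 2 → ℝ := ![-(xhat 1), xhat 0]

/-- Compressional far field pattern
`u_p^∞(x̂,ω) := x̂ ∫ e^{-i k_p x̂·y} (S(y)·x̂) dy`. -/
def up (lam mu : ℝ) (S : E2 → Fin 2 → ℝ) (xhat : E2) (ω : ℝ) : Fin 2 → ℂ :=
  fun j => ((xhat j : ℝ) : ℂ) *
    ∫ y : E2, Complex.exp (-Complex.I * ((kp lam mu ω : ℝ) : ℂ) *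
        ((∑ i, xhat i * y i : ℝ) : ℂ)) * ((∑ i, S y i * xhat i : ℝ) : ℂ)

/-- Shear far field pattern
`u_s^∞(x̂,ω) := x̂^⊥ ∫ e^{-i k_s x̂·y} (S(y)·x̂^⊥) dy`. -/
def us (mu : ℝ) (S : E2 → Fin 2 → ℝ) (xhat : E2) (ω : ℝ) : Fin 2 → ℂ :=
  fun j => ((perp xhat j : ℝ) : ℂ) *
    ∫ y : E2, Complex.exp (-Complex.I * ((ks mu ω : ℝ) : ℂ) *
        ((∑ i, xhat i * y i : ℝ) : ℂ)) * ((∑ i, S y i * perp xhat i : ℝ) : ℂ)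

/-- The indicator
`I_f(z) := (2π)^{-2} ∫_{S¹} ∫_0^∞ [u_p^∞(x̂,ω) + u_s^∞(x̂, √(μ/(λ+2μ)) ω)]
            e^{i k_p x̂·z} (ω/(λ+2μ)) dω dσ(x̂)`. -/
def If (lam mu : ℝ) (S : E2 → Fin 2 → ℝ) (z : E2) : Fin 2 → ℂ :=
  (((2 * π) ^ 2 : ℝ) : ℂ)⁻¹ •
    ∫ xhat : Metric.sphere (0 : E2) 1,
      (∫ ω in Set.Ioi (0 : ℝ), fun j =>
        (up lam mu S (xhat : E2) ω j +
            us mu S (xhat : E2) (Real.sqrt (mu / (lam + 2 * mu)) * ω) j) *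
          Complex.exp (Complex.I * ((kp lam mu ω : ℝ) : ℂ) *
            ((∑ i, (xhat : E2) i * z i : ℝ) : ℂ)) *
          ((ω / (lam + 2 * mu) : ℝ) : ℂ))
      ∂((volume : Measure E2).toSphere)

/-! ### Auxiliary lemmas -/

open Set Metric
open scoped FourierTransform RealInnerProductSpace

lemma integrable_kernel (k : ℝ) (a : E2) (c : E2 → ℝ) (hc : Continuous c)
    (hsupp : HasCompactSupport c) :
    Integrable (fun y : E2 =>
      Complex.exp (-Complex.I * (k : ℂ) * ((∑ i, a i * y i : ℝ) : ℂ)) * ((c y : ℝ) : ℂ)) := by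
  apply Continuous.integrable_of_hasCompactSupport
  · fun_prop
  · exact (hsupp.comp_left (g := fun t : ℝ => (t : ℂ)) Complex.ofReal_zero).mul_left

lemma unit_identity (a : E2) (ha : ‖a‖ = 1) (v : Fin 2 → ℝ) (j : Fin 2) :
    (∑ i, v i * a i) * a j + (∑ i, v i * perp a i) * perp a j = v j := by
  have h := EuclideanSpace.norm_eq a
  rw [ha] at h
  have h2 : (∑ i, ‖a i‖ ^ 2) = 1 := Real.sqrt_eq_one.mp h.symm
  have hu : a 0 ^ 2 + a 1 ^ 2 = 1 := by simpa [Fin.sum_univ_two, sq_abs] using h2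
  fin_cases j
  · simp only [perp, Fin.sum_univ_two]
    simp
    linear_combination v 0 * hu
  · simp only [perp, Fin.sum_univ_two]
    simp
    linear_combination v 1 * hu

lemma ks_scaled (lam mu : ℝ) (hmu : 0 < mu) (hlm : 0 < 2 * mu + lam) (ω : ℝ) :
    ks mu (Real.sqrt (mu / (lam + 2 * mu)) * ω) = kp lam mu ω := by
  have hl : (0:ℝ) < lam + 2 * mu := by linarith
  have hs : Real.sqrt (mu / (lam + 2 * mu)) = Real.sqrt mu / Real.sqrt (lam + 2 * mu) :=
    Real.sqrt_div hmu.le _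
  have hmu' : Real.sqrt mu ≠ 0 := by positivity
  have hL : Real.sqrt (lam + 2 * mu) ≠ 0 := by positivity
  rw [ks, kp, hs]; field_simp

lemma farfield (lam mu : ℝ) (hmu : 0 < mu) (hlm : 0 < 2 * mu + lam)
    (S : E2 → Fin 2 → ℝ) (hS_cont : Continuous S) (hS_supp : HasCompactSupport S)
    (a : E2) (ha : ‖a‖ = 1) (ω : ℝ) (j : Fin 2) :
    up lam mu S a ω j + us mu S a (Real.sqrt (mu / (lam + 2 * mu)) * ω) j
      = FT2 (fun y j => ((S y j : ℝ) : ℂ)) ((kp lam mu ω) • a) j := by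
  set k := kp lam mu ω with hk
  have hA : Continuous fun y => ∑ i, S y i * a i := by fun_prop
  have hB : Continuous fun y => ∑ i, S y i * perp a i := by fun_prop
  have hAs : HasCompactSupport fun y => ∑ i, S y i * a i :=
    hS_supp.comp_left (g := fun v : Fin 2 → ℝ => ∑ i, v i * a i) (by simp)
  have hBs : HasCompactSupport fun y => ∑ i, S y i * perp a i :=
    hS_supp.comp_left (g := fun v : Fin 2 → ℝ => ∑ i, v i * perp a i) (by simp)
  have iA := integrable_kernel k a _ hA hAs
  have iB := integrable_kernel k a _ hB hBs
  rw [up, us, ks_scaled lam mu hmu hlm]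
  rw [← hk, ← integral_const_mul, ← integral_const_mul,
    ← integral_add (iA.const_mul _) (iB.const_mul _)]
  rw [FT2]
  apply integral_congr_ae
  filter_upwards with y
  have hsum : (∑ i, y i * (k • a) i : ℝ) = k * (∑ i, a i * y i) := by
    simp [Fin.sum_univ_two]
    ring
  rw [hsum]
  have hid := unit_identity a ha (S y) j
  push_cast [← hid]
  ring_nf

/-- Polar coordinates for a two-dimensional (componentwise complex) integral. -/
lemma polar2 (g : E2 → Fin 2 → ℂ) (hg : Integrable g) :
    ∫ a : sphere (0 : E2) 1, (∫ r in Ioi (0:ℝ), r • g (r • (a : E2)))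
      ∂((volume : Measure E2).toSphere)
    = ∫ ξ, g ξ := by
  have hdim : Module.finrank ℝ E2 = 2 := by simp
  have h1 : ∫ ξ, g ξ = ∫ x : ({0}ᶜ : Set E2), g x ∂((volume : Measure E2).comap Subtype.val) := by
    rw [integral_subtype_comap (measurableSet_singleton (0:E2)).compl (fun x => g x),
      MeasureTheory.restrict_compl_singleton]
  have hmp := (volume : Measure E2).measurePreserving_homeomorphUnitSphereProd
  rw [hdim] at hmp
  have h2 : ∫ x : ({0}ᶜ : Set E2), g x ∂((volume : Measure E2).comap Subtype.val)
      = ∫ p : sphere (0:E2) 1 × Ioi (0:ℝ), g ((p.2 : ℝ) • (p.1 : E2))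
          ∂((volume : Measure E2).toSphere.prod (.volumeIoiPow (2 - 1))) := by
    rw [← hmp.integral_comp (Homeomorph.measurableEmbedding _)
      (fun p : sphere (0:E2) 1 × Ioi (0:ℝ) => g ((p.2 : ℝ) • (p.1 : E2)))]
    apply integral_congr_ae
    filter_upwards with x
    simp only [homeomorphUnitSphereProd_apply_fst_coe, homeomorphUnitSphereProd_apply_snd_coe]
    rw [smul_inv_smul₀ (norm_ne_zero_iff.mpr x.2)]
  have hint : Integrable (fun p : sphere (0:E2) 1 × Ioi (0:ℝ) => g ((p.2 : ℝ) • (p.1 : E2)))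
      ((volume : Measure E2).toSphere.prod (.volumeIoiPow (2 - 1))) := by
    have : Integrable (fun x : ({0}ᶜ : Set E2) => g x)
        ((volume : Measure E2).comap Subtype.val) := by
      have := ((MeasurableEmbedding.subtype_coe
        (measurableSet_singleton (0:E2)).compl).integrableOn_iff_comap
        (f := g) (μ := volume) (s := {0}ᶜ) (by rw [Subtype.range_coe])).mp
          (hg.integrableOn)
      simpa [Function.comp_def] using this
    rw [← hmp.integrable_comp_emb (Homeomorph.measurableEmbedding _)] at *
    · have heq : (fun p : sphere (0:E2) 1 × Ioi (0:ℝ) => g ((p.2 : ℝ) • (p.1 : E2)))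
          ∘ (homeomorphUnitSphereProd E2) = fun x : ({0}ᶜ : Set E2) => g x := by
        ext x
        simp only [Function.comp_apply, homeomorphUnitSphereProd_apply_fst_coe,
          homeomorphUnitSphereProd_apply_snd_coe]
        rw [smul_inv_smul₀ (norm_ne_zero_iff.mpr x.2)]
      rw [heq]
      exact this
  rw [h1, h2, integral_prod _ hint]
  apply integral_congr_ae
  filter_upwards with a
  rw [Measure.volumeIoiPow]
  simp only [ENNReal.ofReal]
  rw [integral_withDensity_eq_integral_smul
      (by exact (measurable_subtype_coe.pow_const _).real_toNNReal)]
  rw [integral_subtype_comap measurableSet_Ioi (fun r : ℝ => (r ^ (2-1)).toNNReal • g (r • (a:E2)))]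
  apply setIntegral_congr_fun measurableSet_Ioi
  intro r hr
  simp only
  rw [NNReal.smul_def, Real.coe_toNNReal _ (pow_nonneg (le_of_lt hr) _), pow_one]

/-- Change of variables `ω = √(λ+2μ) r` in the frequency integral. -/
lemma omega_subst (lam mu : ℝ) (hlm : 0 < lam + 2 * mu) (h : E2 → Fin 2 → ℂ) (a : E2) :
    ∫ ω in Ioi (0:ℝ), (ω / (lam + 2 * mu)) • h ((kp lam mu ω) • a)
      = ∫ r in Ioi (0:ℝ), r • h (r • a) := by
  set c := Real.sqrt (lam + 2 * mu) with hcdef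
  have hc : 0 < c := Real.sqrt_pos.mpr hlm
  have hcc : c * c = lam + 2 * mu := Real.mul_self_sqrt hlm.le
  set G : ℝ → Fin 2 → ℂ := fun r => r • h (r • a) with hGdef
  have hpt : ∀ ω : ℝ, (ω / (lam + 2 * mu)) • h ((kp lam mu ω) • a) = c⁻¹ • G (c⁻¹ * ω) := by
    intro ω
    rw [hGdef]
    simp only
    rw [smul_smul]
    have h1 : (ω / (lam + 2 * mu)) = c⁻¹ * (c⁻¹ * ω) := by
      rw [← hcc]; field_simp
    have h2 : kp lam mu ω = c⁻¹ * ω := by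
      rw [kp, ← hcdef, div_eq_inv_mul]
    rw [h1, h2]
  calc ∫ ω in Ioi (0:ℝ), (ω / (lam + 2 * mu)) • h ((kp lam mu ω) • a)
      = ∫ ω in Ioi (0:ℝ), c⁻¹ • G (c⁻¹ * ω) :=
        integral_congr_ae (Filter.Eventually.of_forall fun ω => hpt ω)
    _ = c⁻¹ • ∫ ω in Ioi (0:ℝ), G (c⁻¹ * ω) := integral_smul _ _
    _ = c⁻¹ • ((c⁻¹)⁻¹ • ∫ r in Ioi (c⁻¹ * 0), G r) := by
        rw [integral_comp_mul_left_Ioi G 0 (inv_pos.mpr hc)]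
    _ = ∫ r in Ioi (0:ℝ), G r := by
        rw [mul_zero, inv_inv, smul_smul, inv_mul_cancel₀ hc.ne', one_smul]

/-- Scalar Fourier transform with the `e^{-i x·ξ}` convention. -/
def FT1 (f : E2 → ℂ) (ξ : E2) : ℂ :=
  ∫ x : E2, f x * Complex.exp (-Complex.I * ((∑ i, x i * ξ i : ℝ) : ℂ))

lemma FT1_eq_fourier (f : E2 → ℂ) (ξ : E2) :
    FT1 f ξ = 𝓕 f ((2 * π)⁻¹ • ξ) := by
  rw [Real.fourier_eq', FT1]
  apply integral_congr_ae
  filter_upwards with v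
  have hip : ⟪v, (2 * π)⁻¹ • ξ⟫ = (2 * π)⁻¹ * ∑ i, v i * ξ i := by
    rw [real_inner_smul_right, show ⟪v, ξ⟫ = ∑ i, v i * ξ i by simp [PiLp.inner_apply]; ring]
  rw [hip]
  have h2π : (2 * π) ≠ 0 := by positivity
  have : (-2 * π * ((2 * π)⁻¹ * ∑ i, v i * ξ i)) = -(∑ i, v i * ξ i) := by
    field_simp
  rw [this]
  rw [smul_eq_mul]
  push_cast
  rw [mul_comm]
  ring_nf

lemma fourier_eq_FT1 (f : E2 → ℂ) (w : E2) :
    𝓕 f w = FT1 f ((2 * π : ℝ) • w) := by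
  rw [FT1_eq_fourier, smul_smul]
  have h2π : (2 * π) ≠ 0 := by positivity
  rw [inv_mul_cancel₀ h2π, one_smul]

/-- Fourier inversion for the `e^{-i x·ξ}` convention in two dimensions. -/
lemma inversion1 (f : E2 → ℂ) (hc : Continuous f) (hs : HasCompactSupport f)
    (hFT : Integrable (FT1 f)) (z : E2) :
    ∫ ξ : E2, FT1 f ξ * Complex.exp (Complex.I * ((∑ i, ξ i * z i : ℝ) : ℂ))
      = (((2 * π) ^ 2 : ℝ) : ℂ) * f z := by
  have hf : Integrable f := hc.integrable_of_hasCompactSupport hs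
  have h2π : (2 * π) ≠ 0 := by positivity
  have hFf : Integrable (𝓕 f) := by
    have : 𝓕 f = fun w => FT1 f ((2 * π : ℝ) • w) := funext (fourier_eq_FT1 f)
    rw [this]
    exact (integrable_comp_smul_iff volume (FT1 f) h2π).mpr hFT
  set G : E2 → ℂ := fun w => Complex.exp ((↑(2 * π * ⟪w, z⟫) * Complex.I)) • 𝓕 f w with hG
  have hpt : ∀ ξ : E2, FT1 f ξ * Complex.exp (Complex.I * ((∑ i, ξ i * z i : ℝ) : ℂ))
      = G ((2 * π)⁻¹ • ξ) := by
    intro ξ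
    rw [hG]
    simp only
    rw [← FT1_eq_fourier]
    have hip : ⟪(2 * π)⁻¹ • ξ, z⟫ = (2 * π)⁻¹ * ∑ i, ξ i * z i := by
      rw [real_inner_smul_left, show ⟪ξ, z⟫ = ∑ i, ξ i * z i by simp [PiLp.inner_apply]; ring]
    rw [hip]
    have : (2 * π * ((2 * π)⁻¹ * ∑ i, ξ i * z i)) = (∑ i, ξ i * z i) := by field_simp
    rw [this, smul_eq_mul]
    ring_nf
  calc ∫ ξ : E2, FT1 f ξ * Complex.exp (Complex.I * ((∑ i, ξ i * z i : ℝ) : ℂ))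
      = ∫ ξ : E2, G ((2 * π)⁻¹ • ξ) := integral_congr_ae (Filter.Eventually.of_forall hpt)
    _ = |((((2 * π)⁻¹) ^ Module.finrank ℝ E2)⁻¹ : ℝ)| • ∫ w, G w :=
        Measure.integral_comp_smul volume G ((2 * π)⁻¹)
    _ = (((2 * π) ^ 2 : ℝ) : ℂ) * f z := by
        have hdim : Module.finrank ℝ E2 = 2 := by simp
        have hint : ∫ w, G w = f z := by
          have := MeasureTheory.Integrable.fourierInv_fourier_eq hf hFf hc.continuousAt (v := z)
          rw [← this, Real.fourierInv_eq']
        rw [hint, hdim]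
        have : |((((2 * π)⁻¹) ^ 2)⁻¹ : ℝ)| = (2 * π) ^ 2 := by
          rw [inv_pow, inv_inv, abs_of_pos (by positivity)]
        rw [this, Complex.real_smul]

theorem indicator_full_eq_source (lam mu : ℝ) (hmu : 0 < mu) (hlm : 0 < 2 * mu + lam)
    (S : E2 → Fin 2 → ℝ) (hS_cont : Continuous S) (hS_supp : HasCompactSupport S)
    (hFT : Integrable (FT2 (fun y j => ((S y j : ℝ) : ℂ))))
    (z : E2) :
    If lam mu S z = fun j => ((S z j : ℝ) : ℂ) := by
  have hl : (0:ℝ) < lam + 2 * mu := by linarith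
  set cS : E2 → Fin 2 → ℂ := fun y j => ((S y j : ℝ) : ℂ) with hcS
  set h : E2 → Fin 2 → ℂ :=
    fun ξ j => FT2 cS ξ j * Complex.exp (Complex.I * ((∑ i, ξ i * z i : ℝ) : ℂ)) with hh
  have heq : h = fun ξ => Complex.exp (Complex.I * ((∑ i, ξ i * z i : ℝ) : ℂ)) • FT2 cS ξ := by
    funext ξ j
    simp [hh, Pi.smul_apply, smul_eq_mul, mul_comm]
  have hcontexp : Continuous fun ξ : E2 =>
      Complex.exp (Complex.I * ((∑ i, ξ i * z i : ℝ) : ℂ)) := by fun_prop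
  have hint : Integrable h := by
    refine Integrable.mono' hFT.norm ?_ (Filter.Eventually.of_forall fun ξ => ?_)
    · rw [heq]
      exact hcontexp.aestronglyMeasurable.smul hFT.1
    · rw [heq]
      simp only [norm_smul]
      have : ‖Complex.exp (Complex.I * ((∑ i, ξ i * z i : ℝ) : ℂ))‖ = 1 := by
        rw [mul_comm, Complex.norm_exp_ofReal_mul_I]
      rw [this, one_mul]
  have key : If lam mu S z = (((2 * π) ^ 2 : ℝ) : ℂ)⁻¹ • ∫ ξ, h ξ := by
    rw [If]
    congr 1
    rw [← polar2 h hint]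
    apply integral_congr_ae
    filter_upwards with a
    have ha : ‖(a : E2)‖ = 1 := by
      have := a.2
      rwa [Metric.mem_sphere, dist_zero_right] at this
    rw [← omega_subst lam mu hl h (a : E2)]
    apply integral_congr_ae
    apply Filter.Eventually.of_forall
    intro ω
    funext j
    beta_reduce
    rw [farfield lam mu hmu hlm S hS_cont hS_supp (a : E2) ha ω j]
    have hsum : (∑ i, ((kp lam mu ω) • (a:E2)) i * z i : ℝ)
        = kp lam mu ω * (∑ i, (a:E2) i * z i) := by
      simp [Fin.sum_univ_two]
      ring
    rw [Pi.smul_apply, hh]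
    simp only
    rw [hsum]
    push_cast
    rw [Complex.real_smul]
    push_cast
    rw [hcS]; ring_nf
  rw [key]
  funext j
  have hcj : Continuous fun y => cS y j := by
    have : Continuous fun y => S y j := (continuous_apply j).comp hS_cont
    exact Complex.continuous_ofReal.comp this
  have hsj : HasCompactSupport fun y => cS y j :=
    hS_supp.comp_left (g := fun v : Fin 2 → ℝ => ((v j : ℝ) : ℂ)) (by simp)
  have hFTj : Integrable (FT1 fun y => cS y j) := by
    have := (ContinuousLinearMap.proj (R := ℂ) (φ := fun _ : Fin 2 => ℂ) j).integrable_comp hFT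
    exact this
  have hinv := inversion1 (fun y => cS y j) hcj hsj hFTj z
  have hcomp : (∫ ξ, h ξ) j = ∫ ξ, h ξ j := by
    have := (ContinuousLinearMap.proj (R := ℂ) (φ := fun _ : Fin 2 => ℂ) j).integral_comp_comm hint
    exact this.symm
  rw [Pi.smul_apply, hcomp, smul_eq_mul]
  have : (∫ ξ, h ξ j) = ∫ ξ : E2, FT1 (fun y => cS y j) ξ *
      Complex.exp (Complex.I * ((∑ i, ξ i * z i : ℝ) : ℂ)) := rfl
  rw [this, hinv]
  have h2π : (((2 * π) ^ 2 : ℝ) : ℂ) ≠ 0 := by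
    simp only [ne_eq, Complex.ofReal_eq_zero]
    positivity
  rw [← mul_assoc, inv_mul_cancel₀ h2π, one_mul]

end ElasticFull2D

end
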